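/- (Corollary 2.3, Mean Stochastic Model parameters are optimal) Fix real numbers a11, a12, a21, a22, σx, σy with a22 ≠ 0 and ã < 0. Let ε₀ > 0 and let Tx, Vx : (0, ε₀) → ℝ be functions satisfying, as ε → 0⁺, Tx(ε) = −1/(ã*(1 − ε*â)) + O(ε²) (the correlation time of the slow variable) and Vx(ε) = −σs(ε)²/(2*ã*(1 − ε*â)) + O(ε²) (the equilibrium variance of the slow variable), with Tx(ε) ≥ T₀ for some constant T₀ > 0. Define the Mean Stochastic Model parameters a(ε) := −1/Tx(ε) and σX²(ε) := −2*a(ε)*Vx(ε). Then a(ε) = ã*(1 − ε*â) + O(ε²) and σX²(ε) = σs(ε)² + O(ε²) as ε → 0⁺. -/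

import Mathlib

/-!
Both claims are algebra on asymptotics as `ε → 0⁺`. Write `D(ε) := ã(1 − εâ)`, which tends to
`ã ≠ 0`. Then `−1/Tx − D = −(D/Tx)(Tx + 1/D)` with `D/Tx` bounded because `Tx ≥ T₀ > 0`, and
`−2aVx − σs² = −2(a − D)Vx − 2D(Vx + σs²/(2D))` with `Vx` bounded (it is `σs²/(2D)` up to `O(ε²)`).
Each product is `O(1) · O(ε²)`.
-/

/-- `f = O(ε²)` as `ε → 0⁺`, with the bound holding inside `(0, ε₀)`. -/
def IsO2 (ε₀ : ℝ) (f : ℝ → ℝ) : Prop :=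
  ∃ C ε₁ : ℝ, 0 < C ∧ 0 < ε₁ ∧ ε₁ ≤ ε₀ ∧ ∀ ε, 0 < ε → ε < ε₁ → |f ε| ≤ C * ε ^ 2

/-- `σs(ε)² := σx²(1 − 2εâ) + ε σy² a12²/a22²`. -/
noncomputable def sigs (a12 a21 a22 σx σy ε : ℝ) : ℝ :=
  σx ^ 2 * (1 - 2 * ε * (a12 * a21 / a22 ^ 2)) + ε * σy ^ 2 * a12 ^ 2 / a22 ^ 2

open Filter Topology Asymptotics

theorem isO2_iff_isBigO {ε₀ : ℝ} (hε₀ : 0 < ε₀) {f : ℝ → ℝ} :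
    IsO2 ε₀ f ↔ f =O[𝓝[>] 0] fun ε => ε ^ 2 := by
  constructor
  · rintro ⟨C, ε₁, -, hε₁, -, hf⟩
    refine IsBigO.of_bound C ?_
    filter_upwards [Ioo_mem_nhdsGT hε₁] with ε hε
    simpa [abs_of_nonneg (sq_nonneg ε)] using hf ε hε.1 hε.2
  · intro h
    obtain ⟨C, hC, hCf⟩ := h.exists_pos
    obtain ⟨ε₁, hε₁, hsub⟩ := mem_nhdsGT_iff_exists_Ioo_subset.mp hCf.bound
    refine ⟨C, min ε₁ ε₀, hC, lt_min hε₁ hε₀, min_le_right _ _, fun ε hε hεlt => ?_⟩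
    simpa [abs_of_nonneg (sq_nonneg ε)] using hsub ⟨hε, hεlt.trans_le (min_le_left _ _)⟩

section

variable {α : Type*} {l : Filter α} {g : α → ℝ}

theorem isBigO_inv_one_of_eventually_ge {T : α → ℝ} {T₀ : ℝ} (hT₀ : 0 < T₀)
    (hT : ∀ᶠ x in l, T₀ ≤ T x) :
    (fun x => (T x)⁻¹) =O[l] fun _ => (1 : ℝ) := by
  refine IsBigO.of_bound T₀⁻¹ ?_
  filter_upwards [hT] with x hx
  rw [norm_one, mul_one, norm_inv, Real.norm_of_nonneg (hT₀.le.trans hx)]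
  exact inv_anti₀ hT₀ hx

theorem isBigO_neg_inv_sub_of_isBigO_add_inv {D T : α → ℝ} {c T₀ : ℝ}
    (hD : Tendsto D l (𝓝 c)) (hc : c ≠ 0) (hT₀ : 0 < T₀) (hT : ∀ᶠ x in l, T₀ ≤ T x)
    (h : (fun x => T x + 1 / D x) =O[l] g) :
    (fun x => -1 / T x - D x) =O[l] g := by
  have hDT := ((hD.isBigO_one ℝ).mul (isBigO_inv_one_of_eventually_ge hT₀ hT)).neg_left
  refine (hDT.mul h).congr' ?_ (by simp)
  filter_upwards [hT, hD.eventually_ne hc] with x hTx hDx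
  have : T x ≠ 0 := (hT₀.trans_le hTx).ne'
  field_simp
  ring

theorem isBigO_neg_two_mul_mul_sub_of_isBigO_add_div {a D V σ : α → ℝ} {c : ℝ}
    (hD : Tendsto D l (𝓝 c)) (hc : c ≠ 0) (hσ : σ =O[l] fun _ => (1 : ℝ))
    (hg : g =O[l] fun _ => (1 : ℝ))
    (ha : (fun x => a x - D x) =O[l] g) (hV : (fun x => V x + σ x / (2 * D x)) =O[l] g) :
    (fun x => -2 * a x * V x - σ x) =O[l] g := by
  have hV1 : V =O[l] fun _ => (1 : ℝ) := by
    have h2D : (fun x => (2 * D x)⁻¹) =O[l] fun _ => (1 : ℝ) :=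
      ((hD.const_mul 2).inv₀ (mul_ne_zero two_ne_zero hc)).isBigO_one ℝ
    have hσD := hσ.mul h2D
    simp only [mul_one] at hσD
    refine ((hV.trans hg).sub hσD).congr' (.of_forall fun x => ?_) .rfl
    simp [div_eq_mul_inv]
  have hfirst := (ha.mul hV1).const_mul_left (-2)
  have hsecond := ((hD.isBigO_one ℝ).mul hV).const_mul_left (-2)
  simp only [mul_one, one_mul] at hfirst hsecond
  refine (hfirst.add hsecond).congr' ?_ .rfl
  filter_upwards [hD.eventually_ne hc] with x hDx
  field_simp
  ring

end

theorem stmt13_general (a11 a12 a21 a22 σx σy : ℝ)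
    (hat : a11 - a12 * a21 / a22 < 0)
    (ε₀ : ℝ) (hε₀ : 0 < ε₀) (Tx Vx : ℝ → ℝ)
    (T₀ : ℝ) (hT₀ : 0 < T₀) (hT : ∀ ε, 0 < ε → ε < ε₀ → T₀ ≤ Tx ε)
    (hTas : IsO2 ε₀ (fun ε =>
      Tx ε + 1 / ((a11 - a12 * a21 / a22) * (1 - ε * (a12 * a21 / a22 ^ 2)))))
    (hVas : IsO2 ε₀ (fun ε =>
      Vx ε + sigs a12 a21 a22 σx σy ε
        / (2 * (a11 - a12 * a21 / a22) * (1 - ε * (a12 * a21 / a22 ^ 2))))) :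
    IsO2 ε₀ (fun ε =>
        (-1 / Tx ε) - (a11 - a12 * a21 / a22) * (1 - ε * (a12 * a21 / a22 ^ 2))) ∧
      IsO2 ε₀ (fun ε =>
        (-2 * (-1 / Tx ε) * Vx ε) - sigs a12 a21 a22 σx σy ε) := by
  set A := a11 - a12 * a21 / a22
  set B := a12 * a21 / a22 ^ 2
  have tendsto_at_zero {f : ℝ → ℝ} (hf : Continuous f) : Tendsto f (𝓝[>] 0) (𝓝 (f 0)) :=
    hf.continuousAt.tendsto.mono_left nhdsWithin_le_nhds
  have hD : Tendsto (fun ε => A * (1 - ε * B)) (𝓝[>] 0) (𝓝 A) := by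
    simpa using tendsto_at_zero (f := fun ε => A * (1 - ε * B)) (by fun_prop)
  have hσ : (sigs a12 a21 a22 σx σy) =O[𝓝[>] 0] fun _ => (1 : ℝ) :=
    (tendsto_at_zero (by unfold sigs; fun_prop)).isBigO_one ℝ
  have hsq : (fun ε : ℝ => ε ^ 2) =O[𝓝[>] 0] fun _ => (1 : ℝ) :=
    (tendsto_at_zero (by fun_prop)).isBigO_one ℝ
  have hT' : ∀ᶠ ε in 𝓝[>] 0, T₀ ≤ Tx ε := by
    filter_upwards [Ioo_mem_nhdsGT hε₀] with ε hε using hT ε hε.1 hε.2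
  simp only [isO2_iff_isBigO hε₀] at hTas hVas ⊢
  have ha := isBigO_neg_inv_sub_of_isBigO_add_inv hD hat.ne hT₀ hT' hTas
  exact ⟨ha, isBigO_neg_two_mul_mul_sub_of_isBigO_add_div hD hat.ne hσ hsq ha
    (hVas.congr_left fun ε => by rw [mul_assoc])⟩

/-- Corollary 2.3: the Mean Stochastic Model parameters
`a(ε) := −1/Tx(ε)` and `σX²(ε) := −2 a(ε) Vx(ε)` satisfy
`a(ε) = ã(1 − εâ) + O(ε²)` and `σX²(ε) = σs(ε)² + O(ε²)` as `ε → 0⁺`. -/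
theorem stmt13 (a11 a12 a21 a22 σx σy : ℝ) (ha22 : a22 ≠ 0)
    (hat : a11 - a12 * a21 / a22 < 0)
    (ε₀ : ℝ) (hε₀ : 0 < ε₀) (Tx Vx : ℝ → ℝ)
    (T₀ : ℝ) (hT₀ : 0 < T₀) (hT : ∀ ε, 0 < ε → ε < ε₀ → T₀ ≤ Tx ε)
    (hTas : IsO2 ε₀ (fun ε =>
      Tx ε + 1 / ((a11 - a12 * a21 / a22) * (1 - ε * (a12 * a21 / a22 ^ 2)))))
    (hVas : IsO2 ε₀ (fun ε =>
      Vx ε + sigs a12 a21 a22 σx σy ε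
        / (2 * (a11 - a12 * a21 / a22) * (1 - ε * (a12 * a21 / a22 ^ 2))))) :
    IsO2 ε₀ (fun ε =>
        (-1 / Tx ε) - (a11 - a12 * a21 / a22) * (1 - ε * (a12 * a21 / a22 ^ 2))) ∧
      IsO2 ε₀ (fun ε =>
        (-2 * (-1 / Tx ε) * Vx ε) - sigs a12 a21 a22 σx σy ε) :=
  stmt13_general a11 a12 a21 a22 σx σy hat ε₀ hε₀ Tx Vx T₀ hT₀ hT hTas hVas
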